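/- arXiv:1910.13829 — 5 statements merged into one kernel-verified Lean document; each statement's English description precedes it below -/
import Mathlib

section
/- For every positive integer n and every k ≥ 0, if d_n(k) denotes the k-th digit (counting from 0 at the right) of the decimal representation of 5^n, then d_{n+1}(k) = 5·P(d_n(k)) + ⌊d_n(k−1)/2⌋, where P(x) = x mod 2 and d_n(−1) is taken to be 0 (i.e., for k = 0 the formula reads d_{n+1}(0) = 5·P(d_n(0))). -/
/-- `d n k` is the k-th decimal digit (from the right, 0-indexed) of `5^n`. -/
def d (n k : ℕ) : ℕ := 5 ^ n / 10 ^ k % 10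

/-!
Multiplying by `5` is multiplying by `10` and halving. If `q = 10 m + r` with `r < 10`, then
`⌊q / 2⌋ = 10 ⌊m / 2⌋ + (5 P(m) + ⌊r / 2⌋)` with the bracket below `10`. Taking for `q` the
number `⌊5^n / 10^(k-1)⌋` formed by the digits of `5^n` from position `k - 1` on gives the
`k`-th digit of `5^(n+1)`. Nothing changes for multiplication by `b` in base `2 b`.
-/

namespace Nat

theorem div_two_mod_two_mul (q b : ℕ) :
    q / 2 % (2 * b) = b * (q / (2 * b) % 2) + q % (2 * b) / 2 := by
  rcases Nat.eq_zero_or_pos b with rfl | hb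
  · simp
  set m := q / (2 * b)
  set r := q % (2 * b)
  have hr : r / 2 < b := by
    have := Nat.mod_lt q (by omega : 0 < 2 * b)
    omega
  have hhalf : q / 2 = r / 2 + b * (m % 2) + 2 * b * (m / 2) := by
    have hq : q = r + 2 * (b * (m % 2) + 2 * b * (m / 2)) := by
      calc q = r + 2 * b * m := (Nat.mod_add_div q (2 * b)).symm
        _ = r + 2 * b * (m % 2 + 2 * (m / 2)) := by rw [Nat.mod_add_div m 2]
        _ = _ := by ring
    rw [hq, Nat.add_mul_div_left _ _ (by norm_num)]
    ring
  have hlt : b * (m % 2) + r / 2 < 2 * b := by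
    have : m % 2 ≤ 1 := Nat.le_of_lt_succ (Nat.mod_lt m (by norm_num))
    nlinarith
  rw [hhalf, Nat.add_mul_mod_self_left, add_comm (r / 2), Nat.mod_eq_of_lt hlt]

theorem mul_div_two_mul_pow_succ {b : ℕ} (hb : 0 < b) (a k : ℕ) :
    b * a / (2 * b) ^ (k + 1) = a / (2 * b) ^ k / 2 := by
  rw [Nat.div_div_eq_div_mul, pow_succ, mul_comm ((2 * b) ^ k), mul_comm 2 b, mul_assoc b 2,
    Nat.mul_div_mul_left _ _ hb, mul_comm 2]

theorem mul_mod_two_mul_eq (b a : ℕ) : b * a % (2 * b) = b * (a % (2 * b) % 2) := by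
  rw [Nat.mod_mod_of_dvd _ (dvd_mul_right 2 b), mul_comm 2 b, Nat.mul_mod_mul_left]

theorem mul_div_pow_succ_mod_two_mul {b : ℕ} (hb : 0 < b) (a k : ℕ) :
    b * a / (2 * b) ^ (k + 1) % (2 * b) =
      b * (a / (2 * b) ^ (k + 1) % (2 * b) % 2) + a / (2 * b) ^ k % (2 * b) / 2 := by
  rw [mul_div_two_mul_pow_succ hb, div_two_mod_two_mul, Nat.div_div_eq_div_mul, ← pow_succ,
    Nat.mod_mod_of_dvd _ (dvd_mul_right 2 b)]

end Nat

theorem digit_recurrence_general (n k : ℕ) :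
    d (n + 1) k = 5 * (d n k % 2) + (if k = 0 then 0 else d n (k - 1) / 2) := by
  have h10 : (10 : ℕ) = 2 * 5 := rfl
  unfold d
  rw [pow_succ', h10]
  rcases k with _ | k
  · simpa using Nat.mul_mod_two_mul_eq 5 (5 ^ n)
  · simpa using Nat.mul_div_pow_succ_mod_two_mul (by norm_num) (5 ^ n) k

theorem digit_recurrence (n k : ℕ) (hn : 0 < n) :
    d (n + 1) k = 5 * (d n k % 2) + (if k = 0 then 0 else d n (k - 1) / 2) :=
  digit_recurrence_general n k
end

section
/- For every k ≥ 2 and every n ≥ k + 1, the k-th decimal digit of 5^n (counting from the right, 0-indexed) is periodic in n with period 2^(k−1); that is, d_{n + 2^(k−1)}(k) = d_n(k) for all n ≥ k + 1, where d_n(k) = (5^n / 10^k) mod 10. -/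
/-!
Since `5 ^ (k + 1) ∣ 5 ^ n`, the difference `5 ^ (n + 2 ^ (k - 1)) - 5 ^ n = 5 ^ n (5 ^ 2 ^ (k - 1) - 1)`
is divisible by `10 ^ (k + 1)` as soon as `2 ^ (k + 1) ∣ 5 ^ 2 ^ (k - 1) - 1`, which follows from
`5 ≡ 1 [MOD 4]` by repeated squaring. Two numbers congruent modulo `10 ^ (k + 1)` share their
lowest `k + 1` decimal digits.
-/

theorem Nat.div_mod_eq_of_modEq {a b m c : ℕ} (h : a ≡ b [MOD m * c]) :
    a / m % c = b / m % c := by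
  rw [← Nat.mod_mul_right_div_self, h, Nat.mod_mul_right_div_self]

theorem Int.two_pow_add_two_dvd_pow_two_pow_sub_one {a : ℤ} (ha : 4 ∣ a - 1) (m : ℕ) :
    2 ^ (m + 2) ∣ a ^ 2 ^ m - 1 := by
  induction m with
  | zero => simpa using ha
  | succ m ih =>
    have hfactor : a ^ 2 ^ (m + 1) - 1 = (a ^ 2 ^ m - 1) * ((a ^ 2 ^ m - 1) + 2) := by
      rw [pow_succ, pow_mul]; ring
    have htwo : (2 : ℤ) ∣ (a ^ 2 ^ m - 1) + 2 :=
      dvd_add ((dvd_pow_self 2 (by omega)).trans ih) dvd_rfl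
    rw [hfactor, pow_succ]
    exact mul_dvd_mul ih htwo

theorem five_pow_add_two_pow_modEq {k n : ℕ} (hn : k + 1 ≤ n) :
    5 ^ (n + 2 ^ (k - 1)) ≡ 5 ^ n [MOD 10 ^ (k + 1)] := by
  have htwo : (2 : ℤ) ^ (k + 1) ∣ 5 ^ 2 ^ (k - 1) - 1 :=
    (pow_dvd_pow 2 (by omega)).trans
      (Int.two_pow_add_two_dvd_pow_two_pow_sub_one (by norm_num) (k - 1))
  have hfive : (5 : ℤ) ^ (k + 1) ∣ 5 ^ n := pow_dvd_pow 5 hn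
  apply Nat.ModEq.symm
  rw [Nat.modEq_iff_dvd]
  push_cast
  calc (10 : ℤ) ^ (k + 1) = 5 ^ (k + 1) * 2 ^ (k + 1) := by rw [← mul_pow]; norm_num
    _ ∣ 5 ^ n * (5 ^ 2 ^ (k - 1) - 1) := mul_dvd_mul hfive htwo
    _ = 5 ^ (n + 2 ^ (k - 1)) - 5 ^ n := by ring

theorem digit_periodicity_general (k : ℕ) (n : ℕ) (hn : k + 1 ≤ n) :
    5 ^ (n + 2 ^ (k - 1)) / 10 ^ k % 10 = 5 ^ n / 10 ^ k % 10 :=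
  Nat.div_mod_eq_of_modEq (pow_succ 10 k ▸ five_pow_add_two_pow_modEq hn)

theorem digit_periodicity (k : ℕ) (hk : 2 ≤ k) (n : ℕ) (hn : k + 1 ≤ n) :
    5 ^ (n + 2 ^ (k - 1)) / 10 ^ k % 10 = 5 ^ n / 10 ^ k % 10 :=
  digit_periodicity_general k n hn
end

section
/- For every positive integer r there exists a positive integer m such that the decimal representation of 5^m contains at least r consecutive zero digits. -/
/-!
By Euler's theorem `5 ^ φ(2 ^ k) ≡ 1 [MOD 2 ^ k]`, so multiplying by `5 ^ k` gives
`5 ^ (k + φ(2 ^ k) * t) ≡ 5 ^ k [MOD 10 ^ k]`: the last `k` decimal digits of such a power are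
those of `5 ^ k`. With `k = 4 r`, the number `5 ^ k = 625 ^ r` is below `1000 ^ r = 10 ^ (3 r)`,
so digits `3 r, …, 4 r - 1` of the power vanish; they are interior once the exponent is at least
`2 k`, because `25 ^ k ≥ 10 ^ k`.
-/

open Nat

theorem Nat.mul_pow_totient_mul_modEq {a n : ℕ} (c t : ℕ) (h : a.Coprime n) :
    c * a ^ (φ n * t) ≡ c [MOD c * n] := by
  have hpow : a ^ (φ n * t) ≡ 1 [MOD n] := by
    simpa only [pow_mul, one_pow] using (ModEq.pow_totient h).pow t
  simpa only [mul_one] using hpow.mul_left' c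

theorem Nat.div_pow_mod_eq_zero_of_mod_pow_lt {b N j k i : ℕ} (hb : 0 < b)
    (h : N % b ^ k < b ^ j) (hji : j ≤ i) (hik : i < k) : N / b ^ i % b = 0 := by
  have hj : b ^ j ≤ b ^ i := Nat.pow_le_pow_right hb hji
  rw [← Nat.mod_mul_right_div_self, ← pow_succ,
    ← Nat.mod_mod_of_dvd N (pow_dvd_pow b (by omega : i + 1 ≤ k)),
    Nat.mod_eq_of_lt ((h.trans_le hj).trans_le (Nat.pow_le_pow_right hb i.le_succ)),
    Nat.div_eq_of_lt (h.trans_le hj)]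

theorem five_pow_four_mul_lt (r : ℕ) (hr : r ≠ 0) : 5 ^ (4 * r) < 10 ^ (3 * r) := by
  rw [pow_mul, pow_mul]
  exact Nat.pow_lt_pow_left (by norm_num) hr

theorem five_pow_add_totient_mul_mod (k t : ℕ) :
    5 ^ (k + φ (2 ^ k) * t) % 10 ^ k = 5 ^ k % 10 ^ k := by
  rw [pow_add, show 10 ^ k = 5 ^ k * 2 ^ k by rw [← Nat.mul_pow]]
  exact Nat.mul_pow_totient_mul_modEq _ t (Nat.Coprime.pow_right k (by norm_num))

theorem pow_five_has_consecutive_zeros (r : ℕ) (hr : 0 < r) :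
    ∃ m : ℕ, 0 < m ∧ ∃ j : ℕ,
      (∀ i : ℕ, j ≤ i → i < j + r → 5 ^ m / 10 ^ i % 10 = 0) ∧
      10 ^ (j + r) ≤ 5 ^ m := by
  have hsmall := five_pow_four_mul_lt r hr.ne'
  set k := 4 * r with hk
  clear_value k
  have htot : 0 < φ (2 ^ k) := totient_pos.mpr (by positivity)
  have hmod : 5 ^ (k + φ (2 ^ k) * k) % 10 ^ k = 5 ^ k := by
    rw [five_pow_add_totient_mul_mod, Nat.mod_eq_of_lt]
    exact hsmall.trans_le (Nat.pow_le_pow_right (by norm_num) (by omega))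
  refine ⟨k + φ (2 ^ k) * k, Nat.add_pos_left (by omega) _, 3 * r, fun i hji hik => ?_, ?_⟩
  · exact Nat.div_pow_mod_eq_zero_of_mod_pow_lt (by norm_num) (hmod ▸ hsmall) hji (by omega)
  · calc 10 ^ (3 * r + r) = 10 ^ k := by rw [hk]; ring_nf
      _ ≤ 25 ^ k := Nat.pow_le_pow_left (by norm_num) _
      _ = 5 ^ (2 * k) := by rw [pow_mul]; norm_num
      _ ≤ 5 ^ (k + φ (2 ^ k) * k) := Nat.pow_le_pow_right (by norm_num) (by nlinarith)
end

section
/- For k ≥ 2 and n ≥ k + 1, letting l = 2^(k−1), the digit d_{n + l/2}(k) differs from d_n(k) by exactly 5: d_{n + 2^(k−2)}(k) = d_n(k) + 5 or d_n(k) = d_{n + 2^(k−2)}(k) + 5. Equivalently, 5^(n + 2^(k−2)) ≡ 5^n + 5·10^k (mod 10^(k+1)) or 5^(n + 2^(k−2)) + 5·10^k ≡ 5^n (mod 10^(k+1)), for k ≥ 3. -/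
lemma pow5_aux (j : ℕ) : ∃ u, u % 2 = 1 ∧ 5 ^ (2 ^ (j + 1)) = 1 + 2 ^ (j + 3) * u := by
  induction j with
  | zero => exact ⟨3, by norm_num⟩
  | succ j ih =>
    obtain ⟨u, hu, heq⟩ := ih
    refine ⟨u + 2 ^ (j + 2) * u ^ 2, ?_, ?_⟩
    · have h2 : 2 ^ (j + 2) * u ^ 2 % 2 = 0 := by
        simp [Nat.mul_mod, Nat.pow_mod]
      omega
    · have e1 : 2 ^ (j + 1 + 1) = 2 ^ (j + 1) * 2 := pow_succ 2 (j + 1)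
      rw [e1, pow_mul, heq]
      ring

theorem half_cycle_digit_shift (k : ℕ) (hk : 3 ≤ k) (n : ℕ) (hn : k + 1 ≤ n) :
    5 ^ (n + 2 ^ (k - 2)) / 10 ^ k % 10 = 5 ^ n / 10 ^ k % 10 + 5 ∨
    5 ^ n / 10 ^ k % 10 = 5 ^ (n + 2 ^ (k - 2)) / 10 ^ k % 10 + 5 := by
  obtain ⟨j, rfl⟩ : ∃ j, k = j + 3 := ⟨k - 3, by omega⟩
  obtain ⟨t, rfl⟩ : ∃ t, n = t + (j + 4) := ⟨n - (j + 4), by omega⟩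
  obtain ⟨u, hu, heq⟩ := pow5_aux j
  have hk2 : j + 3 - 2 = j + 1 := by omega
  rw [hk2]
  set w := 5 ^ (t + 1) * u with hw
  have key : 5 ^ (t + (j + 4) + 2 ^ (j + 1)) = 5 ^ (t + (j + 4)) + 10 ^ (j + 3) * w := by
    rw [pow_add, heq, hw]
    have h10 : (10 : ℕ) ^ (j + 3) = 2 ^ (j + 3) * 5 ^ (j + 3) := by
      rw [← mul_pow]; norm_num
    rw [h10]
    ring
  have hw2 : w % 2 = 1 := by
    have h5 : 5 ^ (t + 1) % 2 = 1 := by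
      simp [Nat.pow_mod]
    rw [hw, Nat.mul_mod, h5, hu]
  obtain ⟨v, hv⟩ : ∃ v, w = 5 * v := ⟨5 ^ t * u, by rw [hw, pow_succ]; ring⟩
  rw [key, Nat.add_mul_div_left _ _ (by positivity : (0:ℕ) < 10 ^ (j + 3))]
  omega
end

section
/- For each r ≥ 1, there exist infinitely many exponents m such that the decimal representation of 5^m contains at least r consecutive zero digits; in fact, if 5^m has r consecutive zeros ending at digit position k (0-indexed from the right) with k + 1 < m·log₁₀ 5, then so does 5^(m + 2^k) for the same positions. -/
/-- `5^m` has `r` consecutive zero digits ending at position `k`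
(0-indexed from the right), as interior digits. -/
def HasZeros (m r k : ℕ) : Prop :=
  r ≤ k + 1 ∧ 10 ^ (k + 1) ≤ 5 ^ m ∧
    ∀ i : ℕ, k + 1 - r ≤ i → i ≤ k → 5 ^ m / 10 ^ i % 10 = 0

/-!
The last `k + 1` digits of `5^m` are periodic in `m` with period `2^k` as soon as `m ≥ k + 1`:
`5^(m + 2^k) - 5^m = 5^m (5^(2^k) - 1)`, where `5^(k+1) ∣ 5^m` and `2^(k+2) ∣ 5^(2^k) - 1`.
So a block of zeros at positions `≤ k` persists from `5^m` to `5^(m + 2^k)`. A first such block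
comes from a power `5^(k+1) < 10^(k+1-r)`: it is too small to have nonzero digits at positions
`k+1-r, …, k`, and `5^(k+1+2^k)` shares its last `k + 1` digits while being at least `10^(k+1)`.
-/

theorem Int.two_pow_add_two_dvd_pow_two_pow_sub_one_s18 {x : ℤ} (hx : 4 ∣ x - 1) (k : ℕ) :
    2 ^ (k + 2) ∣ x ^ 2 ^ k - 1 := by
  induction k with
  | zero => simpa using hx
  | succ k ih =>
    have hfactor : x ^ 2 ^ (k + 1) - 1 = (x ^ 2 ^ k - 1) * ((x ^ 2 ^ k - 1) + 2) := by ring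
    rw [hfactor, pow_succ]
    exact mul_dvd_mul ih (dvd_add ((dvd_pow_self 2 (by omega)).trans ih) dvd_rfl)

theorem pow_five_add_two_pow_modEq {m k : ℕ} (hkm : k + 1 ≤ m) :
    5 ^ (m + 2 ^ k) ≡ 5 ^ m [MOD 10 ^ (k + 1)] := by
  rw [Nat.ModEq.comm, Nat.modEq_iff_dvd]
  push_cast
  have hdiff : (5 : ℤ) ^ (m + 2 ^ k) - 5 ^ m = 5 ^ m * (5 ^ 2 ^ k - 1) := by ring
  rw [hdiff, show (10 : ℤ) = 5 * 2 by norm_num, mul_pow]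
  exact mul_dvd_mul (pow_dvd_pow 5 hkm) ((pow_dvd_pow 2 (by omega)).trans
    (Int.two_pow_add_two_dvd_pow_two_pow_sub_one_s18 (by norm_num) k))

theorem Nat.ModEq.div_pow_mod_eq {b a a' i k : ℕ} (h : a ≡ a' [MOD b ^ (k + 1)])
    (hik : i ≤ k) :
    a / b ^ i % b = a' / b ^ i % b := by
  have h' : a ≡ a' [MOD b ^ i * b] :=
    pow_succ b i ▸ h.of_dvd (pow_dvd_pow b (by omega : i + 1 ≤ k + 1))
  rw [← Nat.mod_mul_right_div_self, ← Nat.mod_mul_right_div_self a', h']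

theorem HasZeros.add_two_pow {m r k : ℕ} (h : HasZeros m r k) : HasZeros (m + 2 ^ k) r k := by
  obtain ⟨hrk, hlarge, hzero⟩ := h
  have hkm : k + 1 < m := by
    have : 5 ^ (k + 1) < 5 ^ m :=
      (Nat.pow_lt_pow_left (by norm_num : 5 < 10) (by omega)).trans_le hlarge
    exact (Nat.pow_lt_pow_iff_right (by norm_num)).mp this
  refine ⟨hrk, hlarge.trans (Nat.pow_le_pow_right (by norm_num) (Nat.le_add_right m _)),
    fun i hi hik => ?_⟩
  rw [(pow_five_add_two_pow_modEq hkm.le).div_pow_mod_eq hik]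
  exact hzero i hi hik

theorem HasZeros.add_mul_two_pow {m r k : ℕ} (h : HasZeros m r k) (n : ℕ) :
    HasZeros (m + n * 2 ^ k) r k := by
  induction n with
  | zero => simpa using h
  | succ n ih => simpa [add_mul, add_assoc] using ih.add_two_pow

theorem hasZeros_of_pow_five_lt {r k : ℕ} (hrk : r ≤ k + 1)
    (hsmall : 5 ^ (k + 1) < 10 ^ (k + 1 - r)) :
    HasZeros (k + 1 + 2 ^ k) r k := by
  refine ⟨hrk, ?_, fun i hi hik => ?_⟩
  · calc 10 ^ (k + 1) ≤ 25 ^ (k + 1) := Nat.pow_le_pow_left (by norm_num) _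
      _ = 5 ^ (k + 1 + (k + 1)) := by rw [← two_mul, pow_mul]; norm_num
      _ ≤ 5 ^ (k + 1 + 2 ^ k) :=
        Nat.pow_le_pow_right (by norm_num) (by have := @Nat.lt_two_pow_self k; omega)
  · rw [(pow_five_add_two_pow_modEq le_rfl).div_pow_mod_eq hik,
      Nat.div_eq_of_lt (hsmall.trans_le (Nat.pow_le_pow_right (by norm_num) hi))]

theorem hasZeros_seven_mul (r : ℕ) : HasZeros (7 * r + 1 + 2 ^ (7 * r)) r (7 * r) := by
  refine hasZeros_of_pow_five_lt (by omega) ?_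
  calc 5 ^ (7 * r + 1) = 5 * 78125 ^ r := by rw [pow_succ, pow_mul]; ring
    _ < 10 * 1000000 ^ r := by
      have := Nat.pow_le_pow_left (by norm_num : 78125 ≤ 1000000) r
      have := Nat.one_le_pow r 1000000 (by norm_num)
      omega
    _ = 10 ^ (7 * r + 1 - r) := by
      rw [show 7 * r + 1 - r = 6 * r + 1 by omega, pow_succ, pow_mul]; ring

theorem infinitely_many_pow_five_with_zeros_general (r : ℕ) :
    {m : ℕ | ∃ k : ℕ, HasZeros m r k}.Infinite ∧
    ∀ m k : ℕ, HasZeros m r k → ((k : ℝ) + 1 < (m : ℝ) * Real.logb 10 5 →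
      HasZeros (m + 2 ^ k) r k) := by
  refine ⟨Set.infinite_of_forall_exists_gt fun a => ?_, fun m k h _ => h.add_two_pow⟩
  exact ⟨_, ⟨_, (hasZeros_seven_mul r).add_mul_two_pow a⟩,
    by have := Nat.one_le_two_pow (n := 7 * r); nlinarith⟩

theorem infinitely_many_pow_five_with_zeros (r : ℕ) (hr : 1 ≤ r) :
    {m : ℕ | ∃ k : ℕ, HasZeros m r k}.Infinite ∧
    ∀ m k : ℕ, HasZeros m r k → ((k : ℝ) + 1 < (m : ℝ) * Real.logb 10 5 →
      HasZeros (m + 2 ^ k) r k) :=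
  infinitely_many_pow_five_with_zeros_general r
end
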